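/- For all real numbers ξ, η, τ, σ: (1/(2πi)²) ∫_Γ dω ∫_Γ dζ (e^{−ξζ − ηω}/(ζ + ω)) e^{−τζ² + ζ³/3 + σω² + ω³/3} = e^{2(σ³ − τ³)/3 + ση − ξτ} ∫_0^∞ e^{(σ−τ)λ} Ai(ξ + τ² + λ) Ai(η + σ² + λ) dλ, where the double contour integral converges absolutely (with the integrand extended by 0 at ζ = ω = 0) and the integral on the right converges absolutely by the superexponential decay of Ai at +∞. -/

import Mathlib

/-- The contour integral over the contour `Γ` consisting of the ray `t ↦ t e^{-iπ/4}`
traversed from `∞` to `0` followed by the ray `t ↦ t e^{iπ/4}` traversed from `0` to `∞`. -/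
noncomputable def gammaInt (f : ℂ → ℂ) : ℂ :=
  ∫ u in Set.Ioi (0 : ℝ),
    (f ((u : ℂ) * Complex.exp (Complex.I * (Real.pi / 4))) *
        Complex.exp (Complex.I * (Real.pi / 4)) -
      f ((u : ℂ) * Complex.exp (-Complex.I * (Real.pi / 4))) *
        Complex.exp (-Complex.I * (Real.pi / 4)))


/-- The Airy function defined by the contour integral `Ai(x) = (1/2πi) ∫_Γ e^{−ζx + ζ³/3} dζ`. -/
noncomputable def AiryAi (x : ℝ) : ℂ :=
  (1 / (2 * (Real.pi : ℂ) * Complex.I)) *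
    gammaInt (fun ζ => Complex.exp (-ζ * (x : ℂ) + ζ ^ 3 / 3))

open MeasureTheory Set Complex Filter

noncomputable def kk : ℝ := Real.sqrt 2 / 2
noncomputable def eP : ℂ := Complex.exp (Complex.I * (Real.pi / 4))
noncomputable def eM : ℂ := Complex.exp (-Complex.I * (Real.pi / 4))

lemma kk_pos : 0 < kk := by unfold kk; positivity

lemma kk_sq : kk ^ 2 = 1 / 2 := by
  unfold kk
  rw [div_pow, Real.sq_sqrt (by norm_num : (2:ℝ) ≥ 0)]
  norm_num

lemma eP_def : eP = (kk : ℂ) + (kk : ℂ) * Complex.I := by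
  unfold eP kk
  have h : Complex.I * ((Real.pi : ℂ) / 4) = ((Real.pi / 4 : ℝ) : ℂ) * Complex.I := by
    push_cast; ring
  rw [h, Complex.exp_mul_I, ← Complex.ofReal_cos, ← Complex.ofReal_sin,
    Real.cos_pi_div_four, Real.sin_pi_div_four]

lemma eM_def : eM = (kk : ℂ) - (kk : ℂ) * Complex.I := by
  unfold eM kk
  have h : -Complex.I * ((Real.pi : ℂ) / 4) = ((-(Real.pi / 4) : ℝ) : ℂ) * Complex.I := by
    push_cast; ring
  rw [h, Complex.exp_mul_I, ← Complex.ofReal_cos, ← Complex.ofReal_sin,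
    Real.cos_neg, Real.sin_neg, Real.cos_pi_div_four, Real.sin_pi_div_four]
  push_cast; ring

lemma kk_sq' : (kk : ℂ) ^ 2 = 1 / 2 := by rw [← Complex.ofReal_pow, kk_sq]; norm_num

lemma eP_sq : eP ^ 2 = Complex.I := by
  rw [eP_def]
  linear_combination ((1:ℂ) + 2*Complex.I + Complex.I^2) * kk_sq' + (1/2 : ℂ) * Complex.I_sq

lemma eM_sq : eM ^ 2 = -Complex.I := by
  rw [eM_def]
  linear_combination ((1:ℂ) - 2*Complex.I + Complex.I^2) * kk_sq' + (1/2 : ℂ) * Complex.I_sq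

lemma eP_cube : eP ^ 3 = -(kk:ℂ) + (kk:ℂ) * Complex.I := by
  rw [show eP ^ 3 = eP ^ 2 * eP by ring, eP_sq, eP_def]
  linear_combination (kk:ℂ) * Complex.I_sq

lemma eM_cube : eM ^ 3 = -(kk:ℂ) - (kk:ℂ) * Complex.I := by
  rw [show eM ^ 3 = eM ^ 2 * eM by ring, eM_sq, eM_def]
  linear_combination (kk:ℂ) * Complex.I_sq

lemma eP_re : eP.re = kk := by rw [eP_def]; simp
lemma eM_re : eM.re = kk := by rw [eM_def]; simp
lemma abs_eP : ‖eP‖ = 1 := by unfold eP; simp [Complex.norm_exp]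
lemma abs_eM : ‖eM‖ = 1 := by unfold eM; simp [Complex.norm_exp]

lemma gammaInt_eq (f : ℂ → ℂ) :
    gammaInt f = ∫ u in Set.Ioi (0:ℝ), (f ((u:ℂ) * eP) * eP - f ((u:ℂ) * eM) * eM) := rfl

noncomputable def Ee (b s : ℝ) (z : ℂ) : ℂ := z^3/3 - (s:ℂ)*z^2 - (b:ℂ)*z

noncomputable def GG (b s : ℝ) : ℂ := gammaInt (fun z => Complex.exp (Ee b s z))

lemma Ee_eP (b s u : ℝ) : Ee b s ((u:ℂ)*eP)
    = ((-(kk*u^3/3) - b*(kk*u) : ℝ):ℂ) + ((kk*u^3/3 - s*u^2 - b*(kk*u) : ℝ):ℂ)*Complex.I := by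
  unfold Ee
  rw [mul_pow, mul_pow, eP_cube, eP_sq]
  rw [eP_def]
  push_cast
  ring

lemma Ee_eM (b s u : ℝ) : Ee b s ((u:ℂ)*eM)
    = ((-(kk*u^3/3) - b*(kk*u) : ℝ):ℂ) + ((-(kk*u^3/3) + s*u^2 + b*(kk*u) : ℝ):ℂ)*Complex.I := by
  unfold Ee
  rw [mul_pow, mul_pow, eM_cube, eM_sq]
  rw [eM_def]
  push_cast
  ring

lemma re_Ee_eP (b s u : ℝ) : (Ee b s ((u:ℂ)*eP)).re = -(kk*u^3/3) - b*(kk*u) := by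
  rw [Ee_eP]; simp [← Complex.ofReal_pow]

lemma re_Ee_eM (b s u : ℝ) : (Ee b s ((u:ℂ)*eM)).re = -(kk*u^3/3) - b*(kk*u) := by
  rw [Ee_eM]; simp [← Complex.ofReal_pow]

lemma abs_exp_Ee_eP (b s u : ℝ) :
    ‖Complex.exp (Ee b s ((u:ℂ)*eP))‖ = Real.exp (-(kk*u^3/3) - b*(kk*u)) := by
  rw [Complex.norm_exp, re_Ee_eP]

lemma abs_exp_Ee_eM (b s u : ℝ) :
    ‖Complex.exp (Ee b s ((u:ℂ)*eM))‖ = Real.exp (-(kk*u^3/3) - b*(kk*u)) := by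
  rw [Complex.norm_exp, re_Ee_eM]

/-- The integrand of `GG`. -/
noncomputable def gi (b s : ℝ) (u : ℝ) : ℂ :=
  Complex.exp (Ee b s ((u:ℂ)*eP)) * eP - Complex.exp (Ee b s ((u:ℂ)*eM)) * eM

lemma GG_eq (b s : ℝ) : GG b s = ∫ u in Set.Ioi (0:ℝ), gi b s u := rfl

lemma norm_gi_le (b s u : ℝ) : ‖gi b s u‖ ≤ 2 * Real.exp (-(kk*u^3/3) - b*(kk*u)) := by
  unfold gi
  refine (norm_sub_le _ _).trans ?_
  rw [norm_mul, norm_mul]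
  simp only [abs_eP, abs_eM, mul_one]
  rw [abs_exp_Ee_eP, abs_exp_Ee_eM]
  linarith

/-- Key bound: the cubic dominates linear growth. -/
lemma cube_dom (c : ℝ) : ∃ C : ℝ, 0 ≤ C ∧ ∀ u : ℝ, 0 ≤ u → c*u - kk*u^3/3 ≤ C - u := by
  set u₀ : ℝ := max 1 (3*(|c|+1)/kk) with hu₀
  refine ⟨(|c|+1) * u₀, by positivity, fun u hu => ?_⟩
  have h1 : (1:ℝ) ≤ u₀ := le_max_left _ _
  have h2 : 3*(|c|+1)/kk ≤ u₀ := le_max_right _ _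
  have hc : c ≤ |c| := le_abs_self c
  rcases le_total u u₀ with h | h
  · have e1 : c*u ≤ |c| * u := mul_le_mul_of_nonneg_right hc hu
    have e2 : |c| * u ≤ |c| * u₀ := mul_le_mul_of_nonneg_left h (abs_nonneg c)
    nlinarith [pow_nonneg hu 3, kk_pos]
  · have hk := kk_pos
    have hu1 : 1 ≤ u := h1.trans h
    have h3 : 3*(|c|+1) ≤ kk * u₀ := by
      rw [div_le_iff₀ hk] at h2; linarith [mul_comm u₀ kk]
    have h4 : 3*(|c|+1) ≤ kk * u := by nlinarith
    have h6 : 3*(|c|+1)*(u*u) ≤ (kk*u)*(u*u) := mul_le_mul_of_nonneg_right h4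
      (mul_nonneg hu hu)
    have hup : u ≤ u*u := by nlinarith
    have e3 : (c+1)*u*3 ≤ 3*(|c| + 1)*u := by nlinarith
    have e4 : 3*(|c| + 1)*u ≤ 3*(|c| + 1)*(u*u) := by nlinarith [abs_nonneg c]
    have h5 : (c+1)*u*3 ≤ kk*u^3 := by
      have hr : kk*u^3 = kk*u*(u*u) := by ring
      linarith
    have hC : 0 ≤ (|c|+1)*u₀ := by positivity
    nlinarith

lemma integrable_pow_exp_cube (c : ℝ) (n : ℕ) :
    MeasureTheory.IntegrableOn (fun u : ℝ => u^n * Real.exp (c*u - kk*u^3/3)) (Set.Ioi 0) := by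
  obtain ⟨C, hC0, hC⟩ := cube_dom (c + n)
  refine MeasureTheory.Integrable.mono'
      (g := fun u => Real.exp C * Real.exp (-u)) ?_ ?_ ?_
  · have h0 : MeasureTheory.IntegrableOn (fun u : ℝ => Real.exp (-u)) (Set.Ioi 0) := by
      simpa using exp_neg_integrableOn_Ioi 0 one_pos
    exact h0.const_mul _
  · exact Continuous.aestronglyMeasurable (by fun_prop)
  · filter_upwards [MeasureTheory.ae_restrict_mem measurableSet_Ioi] with u hu
    have hu0 : (0:ℝ) ≤ u := le_of_lt hu
    rw [Real.norm_eq_abs, abs_mul, _root_.abs_pow, _root_.abs_of_nonneg hu0, Real.abs_exp]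
    have hpow : u^n ≤ Real.exp (n*u) := by
      calc u^n ≤ (Real.exp u)^n := pow_le_pow_left₀ hu0 (by linarith [Real.add_one_le_exp u]) n
      _ = Real.exp (n*u) := by rw [← Real.exp_nat_mul]
    calc u^n * Real.exp (c*u - kk*u^3/3) ≤ Real.exp (n*u) * Real.exp (c*u - kk*u^3/3) := by
          apply mul_le_mul_of_nonneg_right hpow (Real.exp_nonneg _)
      _ = Real.exp ((c+n)*u - kk*u^3/3) := by rw [← Real.exp_add]; ring_nf
      _ ≤ Real.exp (C - u) := Real.exp_le_exp.2 (hC u hu0)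
      _ = Real.exp C * Real.exp (-u) := by rw [← Real.exp_add]; ring_nf

lemma continuous_gi (s : ℝ) : Continuous (fun p : ℝ × ℝ => gi p.1 s p.2) := by
  unfold gi Ee
  fun_prop

lemma integrable_gi (b s : ℝ) : MeasureTheory.IntegrableOn (gi b s) (Set.Ioi 0) := by
  refine MeasureTheory.Integrable.mono'
      (g := fun u => 2 * (u^0 * Real.exp ((-(b*kk))*u - kk*u^3/3)))
      ((integrable_pow_exp_cube (-(b*kk)) 0).const_mul 2) ?_ ?_
  · exact ((continuous_gi s).comp (Continuous.prodMk_right b)).aestronglyMeasurable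
  · filter_upwards [MeasureTheory.ae_restrict_mem measurableSet_Ioi] with u hu
    have := norm_gi_le b s u
    calc ‖gi b s u‖ ≤ 2 * Real.exp (-(kk*u^3/3) - b*(kk*u)) := this
      _ = 2 * (u^0 * Real.exp ((-(b*kk))*u - kk*u^3/3)) := by rw [pow_zero, one_mul]; ring_nf

/-- `∂/∂s`-type integrand: derivative of `gi (c-s^2) s u` in `s`. -/
noncomputable def dgi (b s : ℝ) (u : ℝ) : ℂ :=
  (2*(s:ℂ)*((u:ℂ)*eP) - ((u:ℂ)*eP)^2) * Complex.exp (Ee b s ((u:ℂ)*eP)) * eP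
  - (2*(s:ℂ)*((u:ℂ)*eM) - ((u:ℂ)*eM)^2) * Complex.exp (Ee b s ((u:ℂ)*eM)) * eM

lemma norm_dgi_le (b s : ℝ) {u : ℝ} (hu : 0 ≤ u) :
    ‖dgi b s u‖ ≤ (2 * |s| * u + u^2) * (2 * Real.exp (-(kk*u^3/3) - b*(kk*u))) := by
  unfold dgi
  have habs : ∀ e : ℂ, ‖e‖ = 1 → ∀ z : ℂ,
      ‖(2*(s:ℂ)*((u:ℂ)*e) - ((u:ℂ)*e)^2) * Complex.exp z * e‖
        ≤ (2 * |s| * u + u^2) * ‖Complex.exp z‖ := by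
    intro e he z
    rw [norm_mul, norm_mul]
    simp only [he, mul_one]
    refine mul_le_mul_of_nonneg_right ?_ (norm_nonneg _)
    refine (norm_sub_le _ _).trans ?_
    rw [norm_mul, norm_mul, norm_pow, norm_mul]
    simp only [he, mul_one, Complex.norm_real, Real.norm_eq_abs, Complex.norm_two]
    rw [_root_.abs_of_nonneg hu]
  refine (norm_sub_le _ _).trans ?_
  have h1 := habs eP abs_eP (Ee b s ((u:ℂ)*eP))
  have h2 := habs eM abs_eM (Ee b s ((u:ℂ)*eM))
  rw [abs_exp_Ee_eP] at h1
  rw [abs_exp_Ee_eM] at h2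
  nlinarith [Real.exp_nonneg (-(kk*u^3/3) - b*(kk*u)), sq_nonneg u, abs_nonneg s,
    mul_nonneg (mul_nonneg (by norm_num : (0:ℝ) ≤ 2) (abs_nonneg s)) hu]

lemma integrable_bound_dgi (c c₂ : ℝ) :
    MeasureTheory.IntegrableOn
      (fun u : ℝ => (2*c₂*u + u^2) * (2 * Real.exp (c*u - kk*u^3/3))) (Set.Ioi 0) := by
  have h := ((integrable_pow_exp_cube c 1).const_mul (4*c₂)).add
    ((integrable_pow_exp_cube c 2).const_mul 2)
  refine h.congr (Filter.Eventually.of_forall fun u => ?_)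
  simp only [Pi.add_apply]
  rw [pow_one]; ring

lemma integrable_dgi (b s : ℝ) : MeasureTheory.IntegrableOn (dgi b s) (Set.Ioi 0) := by
  refine MeasureTheory.Integrable.mono' (integrable_bound_dgi (-(b*kk)) (_root_.abs s)) ?_ ?_
  · apply Continuous.aestronglyMeasurable
    unfold dgi Ee
    fun_prop
  · filter_upwards [MeasureTheory.ae_restrict_mem measurableSet_Ioi] with u hu
    refine (norm_dgi_le b s hu.le).trans (le_of_eq ?_)
    have h : (-(kk*u^3/3) - b*(kk*u)) = ((-(b*kk))*u - kk*u^3/3) := by ring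
    rw [h]

lemma hasDerivAt_gi (c u r : ℝ) :
    HasDerivAt (fun r : ℝ => gi (c - r^2) r u) (dgi (c - r^2) r u) r := by
  have key : ∀ e : ℂ, HasDerivAt (fun r : ℝ => Complex.exp (Ee (c - r^2) r ((u:ℂ)*e)))
      ((2*(r:ℂ)*((u:ℂ)*e) - ((u:ℂ)*e)^2) * Complex.exp (Ee (c - r^2) r ((u:ℂ)*e))) r := by
    intro e
    set ζ : ℂ := (u:ℂ)*e with hζ
    have h2 : HasDerivAt (fun w : ℂ => ζ^3/3 - w*ζ^2 - ((c:ℂ) - w^2)*ζ)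
        (-ζ^2 + 2*(r:ℂ)*ζ) ((r:ℂ)) := by
      have hsq : HasDerivAt (fun w : ℂ => w^2) (2*(r:ℂ)) ((r:ℂ)) := by
        simpa using hasDerivAt_pow 2 ((r:ℂ))
      have h := (((hasDerivAt_id ((r:ℂ))).mul_const (ζ^2)).const_sub (ζ^3/3)).sub
        ((hsq.const_sub (c:ℂ)).mul_const ζ)
      simp only [id_eq, one_mul] at h
      have he : -ζ^2 - -(2*(r:ℂ))*ζ = -ζ^2 + 2*(r:ℂ)*ζ := by ring
      rwa [he] at h
    have h3 := h2.comp_ofReal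
    have h4 : (fun r : ℝ => Ee (c - r^2) r ζ)
        = fun r : ℝ => ζ^3/3 - (r:ℂ)*ζ^2 - ((c:ℂ) - (r:ℂ)^2)*ζ := by
      funext r; unfold Ee; push_cast; ring
    have h5 : HasDerivAt (fun r : ℝ => Ee (c - r^2) r ζ) (-ζ^2 + 2*(r:ℂ)*ζ) r := by
      rw [h4]; exact h3
    have h6 := h5.cexp
    convert h6 using 1
    ring
  unfold gi dgi
  exact ((key eP).mul_const eP).sub ((key eM).mul_const eM)

lemma hasDerivAt_K (c r₀ : ℝ) :
    MeasureTheory.IntegrableOn (dgi (c - r₀^2) r₀) (Set.Ioi 0) ∧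
    HasDerivAt (fun r : ℝ => GG (c - r^2) r) (∫ u in Set.Ioi (0:ℝ), dgi (c - r₀^2) r₀ u) r₀ := by
  have key := hasDerivAt_integral_of_dominated_loc_of_deriv_le (F := fun r u => gi (c - r^2) r u)
    (F' := fun r u => dgi (c - r^2) r u)
    (μ := MeasureTheory.volume.restrict (Set.Ioi 0)) (x₀ := r₀)
    (bound := fun u => (2*(|r₀|+1)*u + u^2) * (2 * Real.exp (((|c| + (|r₀|+1)^2)*kk)*u - kk*u^3/3)))
    (Metric.ball_mem_nhds r₀ one_pos) ?_ ?_ ?_ ?_ ?_ ?_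
  · exact ⟨key.1, by simpa [GG_eq] using key.2⟩
  · exact Filter.Eventually.of_forall fun r =>
      ((continuous_gi r).comp (Continuous.prodMk_right _)).aestronglyMeasurable
  · exact integrable_gi _ _
  · apply Continuous.aestronglyMeasurable
    unfold dgi Ee
    fun_prop
  · filter_upwards [MeasureTheory.ae_restrict_mem measurableSet_Ioi] with u hu
    intro r hr
    have hr1 : |r| ≤ |r₀| + 1 := by
      rw [Metric.mem_ball, Real.dist_eq] at hr
      have := abs_sub_abs_le_abs_sub r r₀
      linarith
    refine (norm_dgi_le _ _ hu.le).trans ?_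
    have hb : -(|c| + (|r₀|+1)^2) ≤ c - r^2 := by
      have h1 : r^2 ≤ (|r₀|+1)^2 := by
        rw [← _root_.sq_abs r]
        exact pow_le_pow_left₀ (abs_nonneg r) hr1 2
      have h2 := neg_abs_le c
      nlinarith
    have hkk := kk_pos
    have hexp : Real.exp (-(kk*u^3/3) - (c - r^2)*(kk*u))
        ≤ Real.exp (((|c| + (|r₀|+1)^2)*kk)*u - kk*u^3/3) := by
      apply Real.exp_le_exp.2
      have h3 : -(c - r^2) ≤ |c| + (|r₀|+1)^2 := by linarith
      have h4 := mul_le_mul_of_nonneg_right h3 (mul_nonneg hkk.le hu.le)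
      nlinarith
    have hu0 : (0:ℝ) ≤ u := le_of_lt hu
    have h5 : 2 * |r| * u + u^2 ≤ 2*(|r₀|+1)*u + u^2 := by
      nlinarith [mul_le_mul_of_nonneg_right hr1 hu0]
    exact mul_le_mul h5 (by linarith)
      (by nlinarith [mul_nonneg (abs_nonneg r) hu0, sq_nonneg u,
        Real.exp_nonneg (-(kk*u^3/3) - (c - r^2)*(kk*u))])
      (by nlinarith [abs_nonneg r₀, sq_nonneg u, mul_nonneg (abs_nonneg r₀) hu0])
  · exact integrable_bound_dgi _ _
  · filter_upwards [MeasureTheory.ae_restrict_mem measurableSet_Ioi] with u hu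
    intro r _
    exact hasDerivAt_gi c u r

lemma Ee_zero (b s : ℝ) : Ee b s 0 = 0 := by unfold Ee; simp

lemma hasDerivAt_exp_Ee (b s : ℝ) (e : ℂ) (u : ℝ) :
    HasDerivAt (fun u : ℝ => Complex.exp (Ee b s ((u:ℂ)*e)))
      ((((u:ℂ)*e)^2 - 2*(s:ℂ)*((u:ℂ)*e) - (b:ℂ)) * e * Complex.exp (Ee b s ((u:ℂ)*e))) u := by
  have h1 : HasDerivAt (fun w : ℂ => Ee b s (w*e))
      ((((u:ℂ)*e)^2 - 2*(s:ℂ)*((u:ℂ)*e) - (b:ℂ)) * e) ((u:ℂ)) := by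
    have hp3 : HasDerivAt (fun w : ℂ => w^3) (3*(u:ℂ)^2) ((u:ℂ)) := by
      simpa using hasDerivAt_pow 3 ((u:ℂ))
    have hp2 : HasDerivAt (fun w : ℂ => w^2) (2*(u:ℂ)) ((u:ℂ)) := by
      simpa using hasDerivAt_pow 2 ((u:ℂ))
    have h := (((hp3.mul_const (e^3)).div_const 3).sub
        ((hp2.mul_const (e^2)).const_mul (s:ℂ))).sub
        (((hasDerivAt_id ((u:ℂ))).mul_const e).const_mul (b:ℂ))
    have hfun : (fun w : ℂ => w^3*e^3/3 - (s:ℂ)*(w^2*e^2) - (b:ℂ)*(id w*e))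
        = fun w : ℂ => Ee b s (w*e) := by
      funext w; unfold Ee; simp only [id_eq]; ring
    simp only [Pi.sub_def] at h
    rw [hfun] at h
    refine h.congr_deriv ?_
    ring
  have h2 := h1.comp_ofReal.cexp
  convert h2 using 1
  ring

lemma ibp (b s : ℝ) : ∫ u in Set.Ioi (0:ℝ), dgi b s u = -(b:ℂ) * GG b s := by
  set g : ℝ → ℂ := fun u => Complex.exp (Ee b s ((u:ℂ)*eP)) - Complex.exp (Ee b s ((u:ℂ)*eM))
    with hg
  set g' : ℝ → ℂ := fun u => -((b:ℂ) * gi b s u + dgi b s u) with hg'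
  have hderiv : ∀ u : ℝ, HasDerivAt g (g' u) u := by
    intro u
    have h := (hasDerivAt_exp_Ee b s eP u).sub (hasDerivAt_exp_Ee b s eM u)
    simp only [Pi.sub_def] at h
    refine h.congr_deriv ?_
    simp only [hg', gi, dgi]
    ring
  have hint : MeasureTheory.IntegrableOn g' (Set.Ioi 0) :=
    (((integrable_gi b s).const_mul ((b:ℂ))).add (integrable_dgi b s)).neg
  have htend : Filter.Tendsto g Filter.atTop (nhds 0) := by
    rw [tendsto_zero_iff_norm_tendsto_zero]
    obtain ⟨C, hC0, hC⟩ := cube_dom (-(b*kk))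
    apply squeeze_zero' (Filter.Eventually.of_forall fun u => norm_nonneg _)
    · filter_upwards [Filter.eventually_ge_atTop (0:ℝ)] with u hu
      calc ‖g u‖ ≤ ‖Complex.exp (Ee b s ((u:ℂ)*eP))‖ + ‖Complex.exp (Ee b s ((u:ℂ)*eM))‖ :=
            norm_sub_le _ _
        _ = 2 * Real.exp (-(kk*u^3/3) - b*(kk*u)) := by
            rw [abs_exp_Ee_eP, abs_exp_Ee_eM]; ring
        _ ≤ 2 * Real.exp (C - u) := by
            have h1 : -(kk*u^3/3) - b*(kk*u) = (-(b*kk))*u - kk*u^3/3 := by ring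
            rw [h1]
            exact mul_le_mul_of_nonneg_left (Real.exp_le_exp.2 (hC u hu)) (by norm_num)
    · have h2 : Filter.Tendsto (fun u : ℝ => C - u) Filter.atTop Filter.atBot := by
        apply Filter.tendsto_atBot_add_const_left
        exact tendsto_neg_atTop_atBot
      have h3 := (Real.tendsto_exp_atBot.comp h2).const_mul (2:ℝ)
      simpa using h3
  have hcont : ContinuousWithinAt g (Set.Ici 0) 0 := by
    apply Continuous.continuousWithinAt
    unfold g; unfold Ee; fun_prop
  have h0 : g 0 = 0 := by simp [hg, Ee_zero]
  have key := MeasureTheory.integral_Ioi_of_hasDerivAt_of_tendsto hcont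
    (fun x _ => hderiv x) hint htend
  rw [h0, sub_zero] at key
  have hsplit : ∫ u in Set.Ioi (0:ℝ), g' u
      = -((b:ℂ) * GG b s + ∫ u in Set.Ioi (0:ℝ), dgi b s u) := by
    rw [hg']
    rw [MeasureTheory.integral_neg, MeasureTheory.integral_add
      ((integrable_gi b s).const_mul ((b:ℂ))) (integrable_dgi b s),
      MeasureTheory.integral_const_mul, GG_eq]
  rw [key] at hsplit
  have := hsplit.symm
  rw [neg_eq_zero] at this
  linear_combination this

lemma psi_const (c s : ℝ) :
    Complex.exp ((c:ℂ)*s - (s:ℂ)^3/3) * GG (c - s^2) s = GG c 0 := by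
  set ψ : ℝ → ℂ := fun r => Complex.exp ((c:ℂ)*r - (r:ℂ)^3/3) * GG (c - r^2) r with hψ
  have hd : ∀ r : ℝ, HasDerivAt ψ 0 r := by
    intro r
    obtain ⟨hint, hK⟩ := hasDerivAt_K c r
    have hibp := ibp (c - r^2) r
    have hexp : HasDerivAt (fun r : ℝ => Complex.exp ((c:ℂ)*r - (r:ℂ)^3/3))
        (((c:ℂ) - (r:ℂ)^2) * Complex.exp ((c:ℂ)*r - (r:ℂ)^3/3)) r := by
      have hp : HasDerivAt (fun w : ℂ => (c:ℂ)*w - w^3/3) ((c:ℂ) - (r:ℂ)^2) ((r:ℂ)) := by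
        have hp3 : HasDerivAt (fun w : ℂ => w^3) (3*(r:ℂ)^2) ((r:ℂ)) := by
          simpa using hasDerivAt_pow 3 ((r:ℂ))
        have h := ((hasDerivAt_id ((r:ℂ))).const_mul (c:ℂ)).sub (hp3.div_const 3)
        simp only [id_eq, Pi.sub_def] at h
        refine h.congr_deriv ?_
        ring
      have h2 := hp.comp_ofReal.cexp
      convert h2 using 1
      ring
    have h := hexp.mul hK
    simp only [Pi.mul_def] at h
    rw [hibp] at h
    refine h.congr_deriv ?_
    push_cast
    ring
  have hconst := is_const_of_deriv_eq_zero (𝕜 := ℝ)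
    (fun r => (hd r).differentiableAt) (fun r => (hd r).deriv) s 0
  have h0 : ψ 0 = GG c 0 := by
    simp only [hψ]
    norm_num
  rw [← h0]
  exact hconst

lemma GG_shift (b s : ℝ) :
    GG b s = Complex.exp (-(b:ℂ)*s - 2*(s:ℂ)^3/3) * GG (b + s^2) 0 := by
  have h := psi_const (b + s^2) s
  have he : b + s^2 - s^2 = b := by ring
  rw [he] at h
  rw [← h, ← mul_assoc, ← Complex.exp_add]
  have : (-(b:ℂ)*s - 2*(s:ℂ)^3/3) + (((b:ℝ)+s^2 : ℝ):ℂ)*s - (s:ℂ)^3/3 = 0 := by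
    push_cast; ring
  rw [show (-(b:ℂ)*s - 2*(s:ℂ)^3/3) + ((((b:ℝ)+s^2 : ℝ):ℂ)*s - (s:ℂ)^3/3)
      = 0 from by push_cast; ring, Complex.exp_zero, one_mul]

section ExpIntegrals

lemma integrable_cexp_neg (c : ℂ) (hc : 0 < c.re) :
    MeasureTheory.IntegrableOn (fun l : ℝ => Complex.exp (-(l:ℂ)*c)) (Set.Ioi 0) := by
  refine MeasureTheory.Integrable.mono' (exp_neg_integrableOn_Ioi 0 hc) ?_ ?_
  · exact Continuous.aestronglyMeasurable (by fun_prop)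
  · filter_upwards [] with l
    rw [Complex.norm_exp]
    apply le_of_eq
    congr 1
    simp [Complex.mul_re]
    ring

lemma integral_cexp_neg (c : ℂ) (hc : 0 < c.re) :
    ∫ l in Set.Ioi (0:ℝ), Complex.exp (-(l:ℂ)*c) = 1/c := by
  have hc0 : c ≠ 0 := fun h => by simp [h] at hc
  have hderiv : ∀ l : ℝ, HasDerivAt (fun l : ℝ => -Complex.exp (-(l:ℂ)*c)/c)
      (Complex.exp (-(l:ℂ)*c)) l := by
    intro l
    have h1 : HasDerivAt (fun w : ℂ => -Complex.exp (-w*c)/c) (Complex.exp (-(l:ℂ)*c)) ((l:ℂ)) := by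
      have h := (((hasDerivAt_id ((l:ℂ))).neg.mul_const c).cexp.neg).div_const c
      simp only [Pi.neg_apply, id_eq] at h
      refine h.congr_deriv ?_
      field_simp
    exact h1.comp_ofReal
  have htend : Filter.Tendsto (fun l : ℝ => -Complex.exp (-(l:ℂ)*c)/c)
      Filter.atTop (nhds 0) := by
    rw [tendsto_zero_iff_norm_tendsto_zero]
    have hnorm : ∀ l : ℝ, ‖-Complex.exp (-(l:ℂ)*c)/c‖ = Real.exp (-(c.re*l)) / ‖c‖ := by
      intro l
      rw [norm_div, norm_neg, Complex.norm_exp]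
      congr 2
      simp [Complex.mul_re]
      ring
    simp only [hnorm]
    have h2 : Filter.Tendsto (fun l : ℝ => c.re * l) Filter.atTop Filter.atTop :=
      Filter.Tendsto.const_mul_atTop hc Filter.tendsto_id
    have h3 := (Real.tendsto_exp_neg_atTop_nhds_zero.comp h2).div_const ‖c‖
    simpa using h3
  have hcontf : Continuous (fun l : ℝ => -Complex.exp (-(l:ℂ)*c)/c) := by
    apply Continuous.div_const
    apply Continuous.neg
    apply Complex.continuous_exp.comp
    fun_prop
  have key := MeasureTheory.integral_Ioi_of_hasDerivAt_of_tendsto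
    hcontf.continuousWithinAt (fun x _ => hderiv x) (integrable_cexp_neg c hc) htend
  rw [key]
  norm_num
  rw [neg_div, neg_neg, one_div]

lemma integral_exp_neg_real (a : ℝ) (ha : 0 < a) :
    ∫ l in Set.Ioi (0:ℝ), Real.exp (-(a*l)) = 1/a := by
  have hderiv : ∀ l : ℝ, HasDerivAt (fun l : ℝ => -Real.exp (-(a*l))/a)
      (Real.exp (-(a*l))) l := by
    intro l
    have h := (((hasDerivAt_id l).const_mul a).neg.exp.neg).div_const a
    simp only [id_eq, Pi.neg_apply] at h
    refine h.congr_deriv ?_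
    field_simp
  have htend : Filter.Tendsto (fun l : ℝ => -Real.exp (-(a*l))/a) Filter.atTop (nhds 0) := by
    have h2 : Filter.Tendsto (fun l : ℝ => a * l) Filter.atTop Filter.atTop :=
      Filter.Tendsto.const_mul_atTop ha Filter.tendsto_id
    have h3 := ((Real.tendsto_exp_neg_atTop_nhds_zero.comp h2).neg).div_const a
    simpa using h3
  have hint : MeasureTheory.IntegrableOn (fun l : ℝ => Real.exp (-(a*l))) (Set.Ioi 0) := by
    have := exp_neg_integrableOn_Ioi 0 ha
    exact this.congr_fun (fun x _ => by ring_nf) measurableSet_Ioi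
  have key := MeasureTheory.integral_Ioi_of_hasDerivAt_of_tendsto
    (Continuous.continuousWithinAt (by fun_prop)) (fun x _ => hderiv x) hint htend
  rw [key]
  norm_num
  rw [neg_div, neg_neg, one_div]

lemma Ee_add (b l s : ℝ) (z : ℂ) : Ee (b+l) s z = Ee b s z - (l:ℂ)*z := by
  unfold Ee; push_cast; ring

lemma exp_lam_eq (ξ τ : ℝ) (ζ ω : ℂ) (l : ℝ) :
    Complex.exp (-(l:ℂ)*ω) * Complex.exp (Ee (ξ+l) τ ζ)
      = Complex.exp (Ee ξ τ ζ) * Complex.exp (-(l:ℂ)*(ζ+ω)) := by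
  rw [← Complex.exp_add, ← Complex.exp_add, Ee_add]
  congr 1
  ring

lemma integrable_lam (ξ τ : ℝ) (ζ ω : ℂ) (hz : 0 < ζ.re) (hw : 0 < ω.re) :
    MeasureTheory.IntegrableOn
      (fun l : ℝ => Complex.exp (-(l:ℂ)*ω) * Complex.exp (Ee (ξ+l) τ ζ)) (Set.Ioi 0) := by
  have h : MeasureTheory.IntegrableOn
      (fun l : ℝ => Complex.exp (Ee ξ τ ζ) * Complex.exp (-(l:ℂ)*(ζ+ω))) (Set.Ioi 0) :=
    (integrable_cexp_neg (ζ+ω) (by rw [Complex.add_re]; linarith)).const_mul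
      (Complex.exp (Ee ξ τ ζ))
  exact h.congr_fun (fun l _ => (exp_lam_eq ξ τ ζ ω l).symm) measurableSet_Ioi

lemma lam_integral (ξ τ : ℝ) (ζ ω : ℂ) (hz : 0 < ζ.re) (hw : 0 < ω.re) :
    ∫ l in Set.Ioi (0:ℝ), Complex.exp (-(l:ℂ)*ω) * Complex.exp (Ee (ξ+l) τ ζ)
      = Complex.exp (Ee ξ τ ζ) / (ζ + ω) := by
  rw [MeasureTheory.setIntegral_congr_fun measurableSet_Ioi
    (fun l _ => exp_lam_eq ξ τ ζ ω l), MeasureTheory.integral_const_mul,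
    integral_cexp_neg (ζ+ω) (by rw [Complex.add_re]; linarith), mul_one_div]

lemma re_mul_eP (u : ℝ) : ((u:ℂ)*eP).re = u * kk := by
  rw [Complex.re_ofReal_mul, eP_re]

lemma re_mul_eM (u : ℝ) : ((u:ℂ)*eM).re = u * kk := by
  rw [Complex.re_ofReal_mul, eM_re]

lemma norm_cexp_neg_mul (l : ℝ) (ω : ℂ) : ‖Complex.exp (-(l:ℂ)*ω)‖ = Real.exp (-(ω.re * l)) := by
  rw [Complex.norm_exp]
  congr 1
  simp [Complex.mul_re]
  ring

lemma swap1 (ξ τ : ℝ) (ω : ℂ) (hw : 0 < ω.re) :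
    (∫ u in Set.Ioi (0:ℝ), ∫ l in Set.Ioi (0:ℝ), Complex.exp (-(l:ℂ)*ω) * gi (ξ+l) τ u)
      = ∫ l in Set.Ioi (0:ℝ), Complex.exp (-(l:ℂ)*ω) * GG (ξ+l) τ := by
  have hint : MeasureTheory.Integrable
      (Function.uncurry fun (u : ℝ) (l : ℝ) => Complex.exp (-(l:ℂ)*ω) * gi (ξ+l) τ u)
      ((MeasureTheory.volume.restrict (Set.Ioi 0)).prod
        (MeasureTheory.volume.restrict (Set.Ioi 0))) := by
    refine MeasureTheory.Integrable.mono'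
      (g := fun p : ℝ × ℝ => (2 * (p.1^0 * Real.exp ((-(ξ*kk))*p.1 - kk*p.1^3/3)))
        * Real.exp (-(ω.re) * p.2)) ?_ ?_ ?_
    · exact MeasureTheory.Integrable.mul_prod
        ((integrable_pow_exp_cube (-(ξ*kk)) 0).const_mul 2)
        (exp_neg_integrableOn_Ioi 0 hw)
    · apply Continuous.aestronglyMeasurable
      unfold Function.uncurry gi Ee
      fun_prop
    · rw [MeasureTheory.Measure.prod_restrict]
      filter_upwards [MeasureTheory.ae_restrict_mem (measurableSet_Ioi.prod measurableSet_Ioi)]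
        with p hp
      obtain ⟨hu, hl⟩ := hp
      obtain ⟨u, l⟩ := p
      simp only [Set.mem_Ioi] at hu hl
      · have hu0 : (0:ℝ) ≤ u := le_of_lt hu
        have hl0 : (0:ℝ) ≤ l := le_of_lt hl
        rw [Function.uncurry, norm_mul, norm_cexp_neg_mul]
        have h1 : ‖gi (ξ+l) τ u‖ ≤ 2 * (u^0 * Real.exp ((-(ξ*kk))*u - kk*u^3/3)) := by
          refine (norm_gi_le (ξ+l) τ u).trans ?_
          rw [pow_zero, one_mul]
          have : -(kk*u^3/3) - (ξ+l)*(kk*u) ≤ (-(ξ*kk))*u - kk*u^3/3 := by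
            nlinarith [mul_nonneg (mul_nonneg hl0 kk_pos.le) hu0]
          have h2 := Real.exp_le_exp.2 this
          linarith
        calc Real.exp (-(ω.re * l)) * ‖gi (ξ+l) τ u‖
            ≤ Real.exp (-(ω.re * l)) * (2 * (u^0 * Real.exp ((-(ξ*kk))*u - kk*u^3/3))) := by
              exact mul_le_mul_of_nonneg_left h1 (Real.exp_nonneg _)
          _ = 2 * (u^0 * Real.exp ((-(ξ*kk))*u - kk*u^3/3)) * Real.exp (-ω.re * l) := by
              rw [neg_mul]; ring
  rw [MeasureTheory.integral_integral_swap hint]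
  refine MeasureTheory.setIntegral_congr_fun measurableSet_Ioi (fun l _ => ?_)
  rw [MeasureTheory.integral_const_mul, ← GG_eq]

/-- Majorant of `gi (c+l) s`. -/
noncomputable def FF (c : ℝ) (u : ℝ) : ℝ := 2 * Real.exp ((-(c*kk))*u - kk*u^3/3)

lemma FF_nonneg (c u : ℝ) : 0 ≤ FF c u := by unfold FF; positivity

lemma integrable_FF (c : ℝ) : MeasureTheory.IntegrableOn (FF c) (Set.Ioi 0) := by
  have h := (integrable_pow_exp_cube (-(c*kk)) 0).const_mul 2
  refine h.congr (Filter.Eventually.of_forall fun u => ?_)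
  simp only [pow_zero, one_mul]
  rfl

lemma FF_mul_exp (c l u : ℝ) : FF c u * Real.exp (-(kk*u)*l) = FF (c+l) u := by
  unfold FF
  rw [mul_assoc, ← Real.exp_add]
  congr 1
  rw [Real.exp_eq_exp]
  ring

lemma norm_gi_le_FF (c s : ℝ) (l u : ℝ) :
    ‖gi (c+l) s u‖ ≤ FF c u * Real.exp (-(kk*u)*l) := by
  refine (norm_gi_le (c+l) s u).trans (le_of_eq ?_)
  rw [FF_mul_exp]
  unfold FF
  congr 1
  rw [Real.exp_eq_exp]
  ring

lemma norm_gi_le_FF' (c s : ℝ) {l u : ℝ} (hl : 0 ≤ l) (hu : 0 ≤ u) :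
    ‖gi (c+l) s u‖ ≤ FF c u := by
  refine (norm_gi_le_FF c s l u).trans ?_
  have h1 : Real.exp (-(kk*u)*l) ≤ 1 := by
    rw [Real.exp_le_one_iff]
    have := mul_nonneg (mul_nonneg kk_pos.le hu) hl
    linarith
  calc FF c u * Real.exp (-(kk*u)*l) ≤ FF c u * 1 :=
        mul_le_mul_of_nonneg_left h1 (FF_nonneg c u)
    _ = FF c u := mul_one _

lemma sm_GG (c s : ℝ) : MeasureTheory.StronglyMeasurable (fun l : ℝ => GG (c+l) s) := by
  have hc : Continuous (Function.uncurry fun (l : ℝ) (u : ℝ) => gi (c+l) s u) := by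
    unfold Function.uncurry gi Ee; fun_prop
  exact hc.stronglyMeasurable.integral_prod_right

/-- The decaying majorant of `‖GG (c+l) s‖`. -/
noncomputable def QQ (c : ℝ) (l : ℝ) : ℝ := ∫ u in Set.Ioi (0:ℝ), FF c u * Real.exp (-(kk*u)*l)

lemma QQ_nonneg (c l : ℝ) : 0 ≤ QQ c l :=
  MeasureTheory.setIntegral_nonneg measurableSet_Ioi
    (fun u _ => mul_nonneg (FF_nonneg c u) (Real.exp_nonneg _))

lemma integrable_FF_exp (c l : ℝ) :
    MeasureTheory.IntegrableOn (fun u => FF c u * Real.exp (-(kk*u)*l)) (Set.Ioi 0) :=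
  (integrable_FF (c+l)).congr (Filter.Eventually.of_forall fun u => (FF_mul_exp c l u).symm)

lemma QQ_le (c : ℝ) {l : ℝ} (hl : 0 ≤ l) : QQ c l ≤ ∫ u in Set.Ioi (0:ℝ), FF c u := by
  refine MeasureTheory.setIntegral_mono_on (integrable_FF_exp c l) (integrable_FF c)
    measurableSet_Ioi (fun u hu => ?_)
  have h1 : Real.exp (-(kk*u)*l) ≤ 1 := by
    rw [Real.exp_le_one_iff]
    have := mul_nonneg (mul_nonneg kk_pos.le (le_of_lt hu)) hl
    linarith
  calc FF c u * Real.exp (-(kk*u)*l) ≤ FF c u * 1 :=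
        mul_le_mul_of_nonneg_left h1 (FF_nonneg c u)
    _ = FF c u := mul_one _

lemma norm_GG_le_QQ (c s : ℝ) (l : ℝ) : ‖GG (c+l) s‖ ≤ QQ c l := by
  rw [GG_eq]
  refine (MeasureTheory.norm_integral_le_integral_norm _).trans ?_
  exact MeasureTheory.setIntegral_mono_on (integrable_gi _ _).norm (integrable_FF_exp c l)
    measurableSet_Ioi (fun u _ => norm_gi_le_FF c s l u)

lemma norm_GG_le_const (c s : ℝ) {l : ℝ} (hl : 0 ≤ l) :
    ‖GG (c+l) s‖ ≤ ∫ u in Set.Ioi (0:ℝ), FF c u :=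
  (norm_GG_le_QQ c s l).trans (QQ_le c hl)

lemma sm_QQ (c : ℝ) : MeasureTheory.StronglyMeasurable (QQ c) := by
  have hc : Continuous (Function.uncurry fun (l : ℝ) (u : ℝ) =>
      FF c u * Real.exp (-(kk*u)*l)) := by
    unfold Function.uncurry FF; fun_prop
  exact hc.stronglyMeasurable.integral_prod_right

lemma integrable_inv_sqrt_exp (c : ℝ) :
    MeasureTheory.IntegrableOn
      (fun u : ℝ => (Real.sqrt u)⁻¹ * Real.exp (c*u - kk*u^3/3)) (Set.Ioi 0) := by
  have h1 : MeasureTheory.IntegrableOn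
      (fun u : ℝ => (Real.sqrt u)⁻¹ * Real.exp (c*u - kk*u^3/3)) (Set.Ioo 0 1) := by
    refine MeasureTheory.Integrable.mono'
        (g := fun u => Real.exp |c| * u ^ (-(1/2) : ℝ)) ?_ ?_ ?_
    · exact ((intervalIntegral.integrableOn_Ioo_rpow_iff one_pos).mpr (by norm_num)).const_mul _
    · refine (ContinuousOn.aestronglyMeasurable ?_ measurableSet_Ioo)
      refine ContinuousOn.mul ?_ (Continuous.continuousOn (by fun_prop))
      exact ContinuousOn.inv₀ Real.continuous_sqrt.continuousOn
        (fun x hx => (Real.sqrt_pos.2 hx.1).ne')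
    · filter_upwards [MeasureTheory.ae_restrict_mem measurableSet_Ioo] with u hu
      obtain ⟨hu0, hu1⟩ := hu
      rw [Real.norm_eq_abs, _root_.abs_of_nonneg (by positivity)]
      have hs : (Real.sqrt u)⁻¹ = u ^ (-(1/2) : ℝ) := by
        rw [Real.sqrt_eq_rpow, ← Real.rpow_neg (le_of_lt hu0)]
      rw [hs]
      have hexp : Real.exp (c*u - kk*u^3/3) ≤ Real.exp |c| := by
        apply Real.exp_le_exp.2
        have h2 : c*u ≤ |c| := by
          calc c*u ≤ |c*u| := le_abs_self _
            _ = |c| * |u| := abs_mul c u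
            _ = |c| * u := by rw [_root_.abs_of_nonneg hu0.le]
            _ ≤ |c| * 1 := mul_le_mul_of_nonneg_left hu1.le (abs_nonneg c)
            _ = |c| := mul_one _
        nlinarith [pow_nonneg hu0.le 3, kk_pos]
      calc u ^ (-(1/2) : ℝ) * Real.exp (c*u - kk*u^3/3)
          ≤ u ^ (-(1/2) : ℝ) * Real.exp |c| :=
            mul_le_mul_of_nonneg_left hexp (Real.rpow_nonneg hu0.le _)
        _ = Real.exp |c| * u ^ (-(1/2) : ℝ) := mul_comm _ _
  have h2 : MeasureTheory.IntegrableOn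
      (fun u : ℝ => (Real.sqrt u)⁻¹ * Real.exp (c*u - kk*u^3/3)) (Set.Ici 1) := by
    refine MeasureTheory.Integrable.mono'
        (g := fun u => u^0 * Real.exp (c*u - kk*u^3/3))
        ((integrable_pow_exp_cube c 0).mono_set (fun x hx => Set.mem_Ioi.2 (lt_of_lt_of_le one_pos hx))) ?_ ?_
    · refine (ContinuousOn.aestronglyMeasurable ?_ measurableSet_Ici)
      refine ContinuousOn.mul ?_ (Continuous.continuousOn (by fun_prop))
      exact ContinuousOn.inv₀ Real.continuous_sqrt.continuousOn
        (fun x hx => (Real.sqrt_pos.2 (lt_of_lt_of_le one_pos hx)).ne')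
    · filter_upwards [MeasureTheory.ae_restrict_mem measurableSet_Ici] with u hu
      rw [Real.norm_eq_abs, _root_.abs_of_nonneg (by positivity), pow_zero, one_mul]
      have hinv : (Real.sqrt u)⁻¹ ≤ 1 := by
        rw [inv_le_one_iff₀]
        right
        rw [show (1:ℝ) = Real.sqrt 1 from (Real.sqrt_one).symm]
        exact Real.sqrt_le_sqrt hu
      calc (Real.sqrt u)⁻¹ * Real.exp (c*u - kk*u^3/3)
          ≤ 1 * Real.exp (c*u - kk*u^3/3) :=
            mul_le_mul_of_nonneg_right hinv (Real.exp_nonneg _)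
        _ = Real.exp (c*u - kk*u^3/3) := one_mul _
  refine ((h1.union h2).mono_set ?_)
  intro x hx
  rcases lt_or_ge x 1 with h | h
  · exact Or.inl ⟨hx, h⟩
  · exact Or.inr h

lemma integrable_FF_inv_sqrt (c : ℝ) :
    MeasureTheory.IntegrableOn (fun u => FF c u * (Real.sqrt u)⁻¹) (Set.Ioi 0) := by
  have h := (integrable_inv_sqrt_exp (-(c*kk))).const_mul 2
  refine h.congr (Filter.Eventually.of_forall fun u => ?_)
  unfold FF; ring

lemma QQ_decay (c : ℝ) {v : ℝ} (hv : 0 < v) :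
    ∫ l in Set.Ioi (0:ℝ), QQ c l * Real.exp (-(kk*v)*l)
      ≤ (∫ u in Set.Ioi (0:ℝ), FF c u * (Real.sqrt u)⁻¹) * (2*kk*Real.sqrt v)⁻¹ := by
  have hswap : ∫ l in Set.Ioi (0:ℝ), QQ c l * Real.exp (-(kk*v)*l)
      = ∫ u in Set.Ioi (0:ℝ), FF c u * (kk*(u+v))⁻¹ := by
    have h1 : ∀ l ∈ Set.Ioi (0:ℝ), QQ c l * Real.exp (-(kk*v)*l)
        = ∫ u in Set.Ioi (0:ℝ), FF c u * Real.exp (-(kk*(u+v)*l)) := by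
      intro l _
      unfold QQ
      rw [← MeasureTheory.integral_mul_const]
      refine MeasureTheory.setIntegral_congr_fun measurableSet_Ioi (fun u _ => ?_)
      rw [mul_assoc, ← Real.exp_add]
      congr 2
      ring
    rw [MeasureTheory.setIntegral_congr_fun measurableSet_Ioi h1]
    have hint : MeasureTheory.Integrable
        (Function.uncurry fun (l : ℝ) (u : ℝ) => FF c u * Real.exp (-(kk*(u+v)*l)))
        ((MeasureTheory.volume.restrict (Set.Ioi 0)).prod
          (MeasureTheory.volume.restrict (Set.Ioi 0))) := by
      refine MeasureTheory.Integrable.mono'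
        (g := fun p : ℝ × ℝ => Real.exp (-(kk*v) * p.1) * FF c p.2) ?_ ?_ ?_
      · exact MeasureTheory.Integrable.mul_prod
          (exp_neg_integrableOn_Ioi 0 (mul_pos kk_pos hv)) (integrable_FF c)
      · apply Continuous.aestronglyMeasurable
        unfold Function.uncurry FF
        fun_prop
      · rw [MeasureTheory.Measure.prod_restrict]
        filter_upwards [MeasureTheory.ae_restrict_mem (measurableSet_Ioi.prod measurableSet_Ioi)]
          with p hp
        obtain ⟨hl, hu⟩ := hp
        obtain ⟨l, u⟩ := p
        simp only [Set.mem_Ioi] at hl hu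
        rw [Function.uncurry, Real.norm_eq_abs, _root_.abs_of_nonneg
          (mul_nonneg (FF_nonneg c u) (Real.exp_nonneg _))]
        have : Real.exp (-(kk*(u+v)*l)) ≤ Real.exp (-(kk*v)*l) := by
          apply Real.exp_le_exp.2
          have := mul_nonneg (mul_nonneg kk_pos.le hu.le) hl.le
          nlinarith
        calc FF c u * Real.exp (-(kk*(u+v)*l)) ≤ FF c u * Real.exp (-(kk*v)*l) :=
              mul_le_mul_of_nonneg_left this (FF_nonneg c u)
          _ = Real.exp (-(kk*v) * l) * FF c u := mul_comm _ _
    rw [MeasureTheory.integral_integral_swap hint]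
    refine MeasureTheory.setIntegral_congr_fun measurableSet_Ioi (fun u hu => ?_)
    rw [MeasureTheory.integral_const_mul, integral_exp_neg_real (kk*(u+v)) (mul_pos kk_pos (by simp only [Set.mem_Ioi] at hu; linarith)),
      one_div]
  rw [hswap, ← MeasureTheory.integral_mul_const]
  refine MeasureTheory.setIntegral_mono_on ?_ ?_ measurableSet_Ioi (fun u hu => ?_)
  · refine MeasureTheory.Integrable.mono' ((integrable_FF c).mul_const (kk*v)⁻¹) ?_ ?_
    · refine (ContinuousOn.aestronglyMeasurable ?_ measurableSet_Ioi)
      refine ContinuousOn.mul (Continuous.continuousOn (by unfold FF; fun_prop)) ?_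
      refine ContinuousOn.inv₀ (Continuous.continuousOn (by fun_prop)) (fun x hx => ?_)
      have hx0 : (0:ℝ) < x := hx
      exact (mul_pos kk_pos (by linarith)).ne'
    · filter_upwards [MeasureTheory.ae_restrict_mem measurableSet_Ioi] with u hu
      have hu0 : (0:ℝ) < u := hu
      have hp : 0 < kk*(u+v) := mul_pos kk_pos (by linarith)
      rw [Real.norm_eq_abs, _root_.abs_of_nonneg
        (mul_nonneg (FF_nonneg c u) (inv_nonneg.2 hp.le))]
      refine mul_le_mul_of_nonneg_left ?_ (FF_nonneg c u)
      apply inv_anti₀ (mul_pos kk_pos hv)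
      nlinarith [kk_pos]
  · exact (integrable_FF_inv_sqrt c).mul_const _
  · have hu0 : (0:ℝ) < u := hu
    rw [mul_assoc]
    refine mul_le_mul_of_nonneg_left ?_ (FF_nonneg c u)
    have hs : (Real.sqrt u)⁻¹ * (2*kk*Real.sqrt v)⁻¹ = (2*kk*(Real.sqrt u * Real.sqrt v))⁻¹ := by
      rw [← mul_inv]
      congr 1
      ring
    rw [hs]
    apply inv_anti₀ (mul_pos (mul_pos two_pos kk_pos)
      (mul_pos (Real.sqrt_pos.2 hu0) (Real.sqrt_pos.2 hv)))
    have hamgm : 2 * (Real.sqrt u * Real.sqrt v) ≤ u + v := by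
      nlinarith [sq_nonneg (Real.sqrt u - Real.sqrt v), Real.sq_sqrt hu0.le,
        Real.sq_sqrt hv.le, Real.sqrt_nonneg u, Real.sqrt_nonneg v]
    nlinarith [kk_pos]

lemma continuous_gi2 (η σ : ℝ) : Continuous (fun p : ℝ × ℝ => gi (η+p.2) (-σ) p.1) := by
  unfold gi Ee; fun_prop

lemma integrable_N_slice (ξ η τ σ : ℝ) {v : ℝ} (hv : 0 < v) :
    MeasureTheory.IntegrableOn (fun l : ℝ => GG (ξ+l) τ * gi (η+l) (-σ) v) (Set.Ioi 0) := by
  refine MeasureTheory.Integrable.mono'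
      (g := fun l => ((∫ u in Set.Ioi (0:ℝ), FF ξ u) * FF η v) * Real.exp (-(kk*v)*l))
      ((exp_neg_integrableOn_Ioi 0 (mul_pos kk_pos hv)).const_mul _) ?_ ?_
  · exact (sm_GG ξ τ).aestronglyMeasurable.mul
      (Continuous.aestronglyMeasurable (by unfold gi Ee; fun_prop))
  · filter_upwards [MeasureTheory.ae_restrict_mem measurableSet_Ioi] with l hl
    rw [norm_mul]
    have h1 := norm_GG_le_const ξ τ (le_of_lt hl)
    have h2 := norm_gi_le_FF η (-σ) l v
    calc ‖GG (ξ+l) τ‖ * ‖gi (η+l) (-σ) v‖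
        ≤ (∫ u in Set.Ioi (0:ℝ), FF ξ u) * (FF η v * Real.exp (-(kk*v)*l)) :=
          mul_le_mul h1 h2 (norm_nonneg _)
            (MeasureTheory.setIntegral_nonneg measurableSet_Ioi (fun u _ => FF_nonneg ξ u))
      _ = ((∫ u in Set.Ioi (0:ℝ), FF ξ u) * FF η v) * Real.exp (-(kk*v)*l) := by ring

lemma integrable_QQ_exp (ξ η : ℝ) {v : ℝ} (hv : 0 < v) :
    MeasureTheory.IntegrableOn
      (fun l : ℝ => QQ ξ l * (FF η v * Real.exp (-(kk*v)*l))) (Set.Ioi 0) := by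
  refine MeasureTheory.Integrable.mono'
      (g := fun l => ((∫ u in Set.Ioi (0:ℝ), FF ξ u) * FF η v) * Real.exp (-(kk*v)*l))
      ((exp_neg_integrableOn_Ioi 0 (mul_pos kk_pos hv)).const_mul _) ?_ ?_
  · exact (sm_QQ ξ).aestronglyMeasurable.mul
      (Continuous.aestronglyMeasurable (by fun_prop))
  · filter_upwards [MeasureTheory.ae_restrict_mem measurableSet_Ioi] with l hl
    rw [Real.norm_eq_abs, _root_.abs_of_nonneg (mul_nonneg (QQ_nonneg ξ l)
      (mul_nonneg (FF_nonneg η v) (Real.exp_nonneg _)))]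
    calc QQ ξ l * (FF η v * Real.exp (-(kk*v)*l))
        ≤ (∫ u in Set.Ioi (0:ℝ), FF ξ u) * (FF η v * Real.exp (-(kk*v)*l)) :=
          mul_le_mul_of_nonneg_right (QQ_le ξ (le_of_lt hl))
            (mul_nonneg (FF_nonneg η v) (Real.exp_nonneg _))
      _ = ((∫ u in Set.Ioi (0:ℝ), FF ξ u) * FF η v) * Real.exp (-(kk*v)*l) := by ring

lemma swap2 (ξ η τ σ : ℝ) :
    (∫ v in Set.Ioi (0:ℝ), ∫ l in Set.Ioi (0:ℝ), GG (ξ+l) τ * gi (η+l) (-σ) v)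
      = ∫ l in Set.Ioi (0:ℝ), GG (ξ+l) τ * GG (η+l) (-σ) := by
  have hSM : MeasureTheory.AEStronglyMeasurable
      (Function.uncurry fun (v l : ℝ) => GG (ξ+l) τ * gi (η+l) (-σ) v)
      ((MeasureTheory.volume.restrict (Set.Ioi 0)).prod
        (MeasureTheory.volume.restrict (Set.Ioi 0))) := by
    have s1 : MeasureTheory.StronglyMeasurable (fun p : ℝ × ℝ => GG (ξ+p.2) τ) :=
      (sm_GG ξ τ).comp_measurable measurable_snd
    exact (s1.mul (continuous_gi2 η σ).stronglyMeasurable).aestronglyMeasurable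
  have hN : MeasureTheory.Integrable
      (Function.uncurry fun (v l : ℝ) => GG (ξ+l) τ * gi (η+l) (-σ) v)
      ((MeasureTheory.volume.restrict (Set.Ioi 0)).prod
        (MeasureTheory.volume.restrict (Set.Ioi 0))) := by
    refine (MeasureTheory.integrable_prod_iff hSM).2 ⟨?_, ?_⟩
    · filter_upwards [MeasureTheory.ae_restrict_mem measurableSet_Ioi] with v hv
      exact integrable_N_slice ξ η τ σ hv
    · refine MeasureTheory.Integrable.mono'
        (g := fun v => ((∫ u in Set.Ioi (0:ℝ), FF ξ u * (Real.sqrt u)⁻¹) * (2*kk)⁻¹)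
          * (FF η v * (Real.sqrt v)⁻¹)) ?_ ?_ ?_
      · exact (integrable_FF_inv_sqrt η).const_mul _
      · exact hSM.norm.integral_prod_right'
      · filter_upwards [MeasureTheory.ae_restrict_mem measurableSet_Ioi] with v hv
        have hv0 : (0:ℝ) < v := hv
        rw [Real.norm_eq_abs, _root_.abs_of_nonneg (MeasureTheory.integral_nonneg
          (fun l => norm_nonneg _))]
        have step1 : (∫ l in Set.Ioi (0:ℝ), ‖GG (ξ+l) τ * gi (η+l) (-σ) v‖)
            ≤ ∫ l in Set.Ioi (0:ℝ), QQ ξ l * (FF η v * Real.exp (-(kk*v)*l)) := by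
          refine MeasureTheory.setIntegral_mono_on
            (integrable_N_slice ξ η τ σ hv0).norm (integrable_QQ_exp ξ η hv0)
            measurableSet_Ioi (fun l _ => ?_)
          rw [norm_mul]
          exact mul_le_mul (norm_GG_le_QQ ξ τ l) (norm_gi_le_FF η (-σ) l v)
            (norm_nonneg _) (QQ_nonneg ξ l)
        have step2 : (∫ l in Set.Ioi (0:ℝ), QQ ξ l * (FF η v * Real.exp (-(kk*v)*l)))
            = FF η v * ∫ l in Set.Ioi (0:ℝ), QQ ξ l * Real.exp (-(kk*v)*l) := by
          rw [← MeasureTheory.integral_const_mul]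
          refine MeasureTheory.setIntegral_congr_fun measurableSet_Ioi (fun l _ => ?_)
          ring
        have step3 := QQ_decay ξ hv0
        have step4 : FF η v * ((∫ u in Set.Ioi (0:ℝ), FF ξ u * (Real.sqrt u)⁻¹)
              * (2*kk*Real.sqrt v)⁻¹)
            = ((∫ u in Set.Ioi (0:ℝ), FF ξ u * (Real.sqrt u)⁻¹) * (2*kk)⁻¹)
              * (FF η v * (Real.sqrt v)⁻¹) := by
          rw [show (2*kk*Real.sqrt v)⁻¹ = (2*kk)⁻¹ * (Real.sqrt v)⁻¹ from by
            rw [← mul_inv]]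
          ring
        calc (∫ l in Set.Ioi (0:ℝ), ‖GG (ξ+l) τ * gi (η+l) (-σ) v‖)
            ≤ FF η v * ∫ l in Set.Ioi (0:ℝ), QQ ξ l * Real.exp (-(kk*v)*l) := by
              rw [← step2]; exact step1
          _ ≤ FF η v * ((∫ u in Set.Ioi (0:ℝ), FF ξ u * (Real.sqrt u)⁻¹)
                * (2*kk*Real.sqrt v)⁻¹) :=
              mul_le_mul_of_nonneg_left step3 (FF_nonneg η v)
          _ = _ := step4
  rw [MeasureTheory.integral_integral_swap hN]
  refine MeasureTheory.setIntegral_congr_fun measurableSet_Ioi (fun l _ => ?_)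
  rw [MeasureTheory.integral_const_mul, ← GG_eq]

lemma two_pi_I_ne : (2 * (Real.pi : ℂ) * Complex.I) ≠ 0 := by
  simp [Real.pi_ne_zero, Complex.I_ne_zero]

lemma GG_airy (x : ℝ) : GG x 0 = (2 * (Real.pi : ℂ) * Complex.I) * AiryAi x := by
  unfold AiryAi
  have h : gammaInt (fun ζ => Complex.exp (-ζ * (x:ℂ) + ζ ^ 3 / 3)) = GG x 0 := by
    unfold GG
    congr 1
    funext z
    congr 1
    unfold Ee
    push_cast
    ring
  rw [h, ← mul_assoc, mul_one_div, div_self two_pi_I_ne, one_mul]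

lemma pointwise_f (ξ η τ σ : ℝ) (ω : ℂ) (hw : 0 < ω.re) {u : ℝ} (hu : 0 < u) :
    (Complex.exp (-(ξ:ℂ)*((u:ℂ)*eP) - (η:ℂ)*ω) / ((u:ℂ)*eP + ω) *
        Complex.exp (-(τ:ℂ)*((u:ℂ)*eP)^2 + ((u:ℂ)*eP)^3/3 + (σ:ℂ)*ω^2 + ω^3/3)) * eP
      - (Complex.exp (-(ξ:ℂ)*((u:ℂ)*eM) - (η:ℂ)*ω) / ((u:ℂ)*eM + ω) *
        Complex.exp (-(τ:ℂ)*((u:ℂ)*eM)^2 + ((u:ℂ)*eM)^3/3 + (σ:ℂ)*ω^2 + ω^3/3)) * eM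
      = Complex.exp (Ee η (-σ) ω) *
          ∫ l in Set.Ioi (0:ℝ), Complex.exp (-(l:ℂ)*ω) * gi (ξ+l) τ u := by
  have hzP : 0 < ((u:ℂ)*eP).re := by rw [re_mul_eP]; exact mul_pos hu kk_pos
  have hzM : 0 < ((u:ℂ)*eM).re := by rw [re_mul_eM]; exact mul_pos hu kk_pos
  have hterm : ∀ ζ : ℂ,
      Complex.exp (-(ξ:ℂ)*ζ - (η:ℂ)*ω) / (ζ + ω) *
          Complex.exp (-(τ:ℂ)*ζ^2 + ζ^3/3 + (σ:ℂ)*ω^2 + ω^3/3)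
        = Complex.exp (Ee η (-σ) ω) * (Complex.exp (Ee ξ τ ζ) / (ζ + ω)) := by
    intro ζ
    rw [div_mul_eq_mul_div, ← Complex.exp_add, ← mul_div_assoc, ← Complex.exp_add]
    congr 2
    unfold Ee
    push_cast
    ring
  have hsub : (∫ l in Set.Ioi (0:ℝ), Complex.exp (-(l:ℂ)*ω) * gi (ξ+l) τ u)
      = (∫ l in Set.Ioi (0:ℝ), Complex.exp (-(l:ℂ)*ω)
            * Complex.exp (Ee (ξ+l) τ ((u:ℂ)*eP))) * eP
        - (∫ l in Set.Ioi (0:ℝ), Complex.exp (-(l:ℂ)*ω)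
            * Complex.exp (Ee (ξ+l) τ ((u:ℂ)*eM))) * eM := by
    rw [← MeasureTheory.integral_mul_const, ← MeasureTheory.integral_mul_const,
      ← MeasureTheory.integral_sub ((integrable_lam ξ τ _ ω hzP hw).mul_const eP)
        ((integrable_lam ξ τ _ ω hzM hw).mul_const eM)]
    refine MeasureTheory.setIntegral_congr_fun measurableSet_Ioi (fun l _ => ?_)
    unfold gi
    ring
  rw [hterm, hterm, hsub, lam_integral ξ τ _ ω hzP hw, lam_integral ξ τ _ ω hzM hw]
  ring

lemma inner_gamma (ξ η τ σ : ℝ) (ω : ℂ) (hw : 0 < ω.re) :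
    gammaInt (fun ζ => Complex.exp (-(ξ:ℂ)*ζ - (η:ℂ)*ω) / (ζ + ω) *
        Complex.exp (-(τ:ℂ)*ζ^2 + ζ^3/3 + (σ:ℂ)*ω^2 + ω^3/3))
      = Complex.exp (Ee η (-σ) ω) *
          ∫ l in Set.Ioi (0:ℝ), Complex.exp (-(l:ℂ)*ω) * GG (ξ+l) τ := by
  rw [gammaInt_eq, MeasureTheory.setIntegral_congr_fun measurableSet_Ioi
    (fun u hu => pointwise_f ξ η τ σ ω hw hu), MeasureTheory.integral_const_mul,
    swap1 ξ τ ω hw]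

lemma integrable_outer_term (ξ η τ σ : ℝ) {v : ℝ} (hv : 0 < v) (e : ℂ)
    (habs : ∀ l : ℝ, ‖Complex.exp (Ee (η+l) (-σ) ((v:ℂ)*e))‖
      = Real.exp (-(kk*v^3/3) - (η+l)*(kk*v))) :
    MeasureTheory.IntegrableOn
      (fun l : ℝ => GG (ξ+l) τ * (Complex.exp (Ee (η+l) (-σ) ((v:ℂ)*e)) * e)) (Set.Ioi 0) := by
  refine MeasureTheory.Integrable.mono'
      (g := fun l => ((∫ u in Set.Ioi (0:ℝ), FF ξ u) * (‖e‖ * FF η v)) * Real.exp (-(kk*v)*l))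
      ((exp_neg_integrableOn_Ioi 0 (mul_pos kk_pos hv)).const_mul _) ?_ ?_
  · refine (sm_GG ξ τ).aestronglyMeasurable.mul
      (Continuous.aestronglyMeasurable ?_)
    unfold Ee
    fun_prop
  · filter_upwards [MeasureTheory.ae_restrict_mem measurableSet_Ioi] with l hl
    rw [norm_mul, norm_mul, habs l]
    have h1 : Real.exp (-(kk*v^3/3) - (η+l)*(kk*v)) = (FF η v * Real.exp (-(kk*v)*l)) / 2 := by
      rw [FF_mul_exp]
      unfold FF
      rw [mul_comm (2:ℝ), mul_div_assoc]
      norm_num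
      ring
    rw [h1]
    have h2 := norm_GG_le_const ξ τ (le_of_lt hl)
    have hFF := FF_nonneg η v
    have hFFl : 0 ≤ FF η v * Real.exp (-(kk*v)*l) := mul_nonneg hFF (Real.exp_nonneg _)
    have hne : 0 ≤ ‖e‖ := norm_nonneg e
    calc ‖GG (ξ+l) τ‖ * ((FF η v * Real.exp (-(kk*v)*l)) / 2 * ‖e‖)
        ≤ (∫ u in Set.Ioi (0:ℝ), FF ξ u) * ((FF η v * Real.exp (-(kk*v)*l)) * ‖e‖) := by
          refine mul_le_mul h2 ?_ (by positivity) (MeasureTheory.setIntegral_nonneg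
            measurableSet_Ioi (fun u _ => FF_nonneg ξ u))
          nlinarith
      _ = ((∫ u in Set.Ioi (0:ℝ), FF ξ u) * (‖e‖ * FF η v)) * Real.exp (-(kk*v)*l) := by ring

lemma step_v (ξ η τ σ : ℝ) {v : ℝ} (hv : 0 < v) :
    (Complex.exp (Ee η (-σ) ((v:ℂ)*eP)) *
        ∫ l in Set.Ioi (0:ℝ), Complex.exp (-(l:ℂ)*((v:ℂ)*eP)) * GG (ξ+l) τ) * eP
      - (Complex.exp (Ee η (-σ) ((v:ℂ)*eM)) *
        ∫ l in Set.Ioi (0:ℝ), Complex.exp (-(l:ℂ)*((v:ℂ)*eM)) * GG (ξ+l) τ) * eM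
      = ∫ l in Set.Ioi (0:ℝ), GG (ξ+l) τ * gi (η+l) (-σ) v := by
  have key : ∀ e : ℂ, (∀ l : ℝ, ‖Complex.exp (Ee (η+l) (-σ) ((v:ℂ)*e))‖
      = Real.exp (-(kk*v^3/3) - (η+l)*(kk*v))) →
      (∫ l in Set.Ioi (0:ℝ), GG (ξ+l) τ * (Complex.exp (Ee (η+l) (-σ) ((v:ℂ)*e)) * e))
        = (Complex.exp (Ee η (-σ) ((v:ℂ)*e)) *
            ∫ l in Set.Ioi (0:ℝ), Complex.exp (-(l:ℂ)*((v:ℂ)*e)) * GG (ξ+l) τ) * e := by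
    intro e habs
    rw [← MeasureTheory.integral_const_mul, ← MeasureTheory.integral_mul_const]
    refine MeasureTheory.setIntegral_congr_fun measurableSet_Ioi (fun l _ => ?_)
    have hx : Complex.exp (Ee (η+l) (-σ) ((v:ℂ)*e))
        = Complex.exp (Ee η (-σ) ((v:ℂ)*e)) * Complex.exp (-(l:ℂ)*((v:ℂ)*e)) := by
      rw [Ee_add, show Ee η (-σ) ((v:ℂ)*e) - (l:ℂ)*((v:ℂ)*e)
        = Ee η (-σ) ((v:ℂ)*e) + (-(l:ℂ)*((v:ℂ)*e)) from by ring, Complex.exp_add]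
    rw [hx]
    ring
  have habsP : ∀ l : ℝ, ‖Complex.exp (Ee (η+l) (-σ) ((v:ℂ)*eP))‖
      = Real.exp (-(kk*v^3/3) - (η+l)*(kk*v)) := fun l => abs_exp_Ee_eP (η+l) (-σ) v
  have habsM : ∀ l : ℝ, ‖Complex.exp (Ee (η+l) (-σ) ((v:ℂ)*eM))‖
      = Real.exp (-(kk*v^3/3) - (η+l)*(kk*v)) := fun l => abs_exp_Ee_eM (η+l) (-σ) v
  rw [← key eP habsP, ← key eM habsM,
    ← MeasureTheory.integral_sub (integrable_outer_term ξ η τ σ hv eP habsP)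
      (integrable_outer_term ξ η τ σ hv eM habsM)]
  refine MeasureTheory.setIntegral_congr_fun measurableSet_Ioi (fun l _ => ?_)
  unfold gi
  ring


theorem double_contour_integral_eq_Airy_product (ξ η τ σ : ℝ) :
    (1 / (2 * (Real.pi : ℂ) * Complex.I)) ^ 2 *
        gammaInt (fun ω => gammaInt (fun ζ =>
          Complex.exp (-(ξ : ℂ) * ζ - (η : ℂ) * ω) / (ζ + ω) *
            Complex.exp (-(τ : ℂ) * ζ ^ 2 + ζ ^ 3 / 3 + (σ : ℂ) * ω ^ 2 + ω ^ 3 / 3)))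
      = Complex.exp (((2 * (σ ^ 3 - τ ^ 3) / 3 + σ * η - ξ * τ : ℝ) : ℂ)) *
          ∫ l in Set.Ioi (0 : ℝ),
            Complex.exp ((((σ - τ) * l : ℝ) : ℂ)) *
              AiryAi (ξ + τ ^ 2 + l) * AiryAi (η + σ ^ 2 + l) := by
  have hout : gammaInt (fun ω => gammaInt (fun ζ =>
          Complex.exp (-(ξ : ℂ) * ζ - (η : ℂ) * ω) / (ζ + ω) *
            Complex.exp (-(τ : ℂ) * ζ ^ 2 + ζ ^ 3 / 3 + (σ : ℂ) * ω ^ 2 + ω ^ 3 / 3)))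
      = ∫ l in Set.Ioi (0:ℝ), GG (ξ+l) τ * GG (η+l) (-σ) := by
    rw [gammaInt_eq]
    rw [MeasureTheory.setIntegral_congr_fun measurableSet_Ioi (fun v hv => ?_), swap2]
    have hvP : 0 < ((v:ℂ)*eP).re := by rw [re_mul_eP]; exact mul_pos hv kk_pos
    have hvM : 0 < ((v:ℂ)*eM).re := by rw [re_mul_eM]; exact mul_pos hv kk_pos
    rw [inner_gamma ξ η τ σ ((v:ℂ)*eP) hvP, inner_gamma ξ η τ σ ((v:ℂ)*eM) hvM]
    exact step_v ξ η τ σ hv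
  rw [hout]
  have hpt : ∀ l ∈ Set.Ioi (0:ℝ), GG (ξ+l) τ * GG (η+l) (-σ)
      = (2 * (Real.pi : ℂ) * Complex.I)^2 *
          (Complex.exp (((2 * (σ ^ 3 - τ ^ 3) / 3 + σ * η - ξ * τ : ℝ) : ℂ)) *
            (Complex.exp ((((σ - τ) * l : ℝ) : ℂ)) *
              AiryAi (ξ + τ ^ 2 + l) * AiryAi (η + σ ^ 2 + l))) := by
    intro l _
    rw [GG_shift (ξ+l) τ, GG_shift (η+l) (-σ), GG_airy, GG_airy,
      show ((ξ+l)+τ^2 : ℝ) = ξ+τ^2+l from by ring,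
      show ((η+l)+(-σ)^2 : ℝ) = η+σ^2+l from by ring]
    have hexp : Complex.exp (-((ξ+l:ℝ):ℂ)*(τ:ℂ) - 2*(τ:ℂ)^3/3) *
        Complex.exp (-((η+l:ℝ):ℂ)*((-σ:ℝ):ℂ) - 2*((-σ:ℝ):ℂ)^3/3)
        = Complex.exp (((2 * (σ ^ 3 - τ ^ 3) / 3 + σ * η - ξ * τ : ℝ) : ℂ)) *
          Complex.exp ((((σ - τ) * l : ℝ) : ℂ)) := by
      rw [← Complex.exp_add, ← Complex.exp_add]
      congr 1
      push_cast
      ring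
    linear_combination ((2 * (Real.pi : ℂ) * Complex.I)^2 *
      AiryAi (ξ + τ ^ 2 + l) * AiryAi (η + σ ^ 2 + l)) * hexp
  rw [MeasureTheory.setIntegral_congr_fun measurableSet_Ioi hpt,
    MeasureTheory.integral_const_mul, MeasureTheory.integral_const_mul, ← mul_assoc, ← mul_assoc]
  congr 1
  have h1 : (1 / (2 * (Real.pi : ℂ) * Complex.I)) ^ 2 * (2 * (Real.pi : ℂ) * Complex.I) ^ 2
      = 1 := by
    rw [one_div, ← mul_pow, inv_mul_cancel₀ two_pi_I_ne, one_pow]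
  linear_combination Complex.exp (((2 * (σ ^ 3 - τ ^ 3) / 3 + σ * η - ξ * τ : ℝ) : ℂ)) * h1
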